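/- There is a nonzero finite element of Henle's ring that is sent to 0 in B/o but to a nonzero infinitesimal in the hyperreal field: for the sequence x n = 1/(n+1)², (a) the germ of x in Filter.Germ (Filter.cofinite : Filter ℕ) ℝ is nonzero (and finite), (b) x belongs to o, so the class of x in B/o is 0, and (c) Hyperreal.ofSeq x is nonzero, positive, and infinitesimal in ℝ*. -/

import Mathlib

open Filter

def littleO : Set (ℕ → ℝ) :=
  {f : ℕ → ℝ | Filter.Tendsto (fun n : ℕ => (n : ℝ) * f n) Filter.atTop (nhds 0)}

/-- The subring of bounded real sequences. -/
def BddSeq : Subring (ℕ → ℝ) where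
  carrier := {f : ℕ → ℝ | ∃ C : ℝ, ∀ n, |f n| ≤ C}
  zero_mem' := ⟨0, fun n => by simp⟩
  one_mem' := ⟨1, fun n => by simp⟩
  add_mem' := by
    rintro x y ⟨C, hC⟩ ⟨D, hD⟩
    exact ⟨C + D, fun n => (abs_add_le _ _).trans (add_le_add (hC n) (hD n))⟩
  neg_mem' := by
    rintro x ⟨C, hC⟩
    exact ⟨C, fun n => by simpa using hC n⟩
  mul_mem' := by
    rintro x y ⟨C, hC⟩ ⟨D, hD⟩
    refine ⟨C * D, fun n => ?_⟩
    rw [Pi.mul_apply, abs_mul]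
    exact mul_le_mul (hC n) (hD n) (abs_nonneg _) ((abs_nonneg _).trans (hC n))

/-- `littleO` as an ideal of the ring of bounded sequences. -/
def littleOIdeal : Ideal BddSeq where
  carrier := {f : BddSeq | (f : ℕ → ℝ) ∈ littleO}
  zero_mem' := by simp [littleO]
  add_mem' := by
    rintro x y hx hy
    have := hx.add hy
    simp only [littleO, Set.mem_setOf_eq] at *
    simpa [mul_add] using this
  smul_mem' := by
    rintro c x hx
    obtain ⟨C, hC⟩ := c.2
    have h1 : Filter.Tendsto (fun n : ℕ => C * |(n : ℝ) * (x : ℕ → ℝ) n|)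
        Filter.atTop (nhds 0) := by
      have := hx.abs.const_mul C
      simpa using this
    refine squeeze_zero_norm (fun n => ?_) h1
    have hcx : ((c • x : BddSeq) : ℕ → ℝ) n = (c : ℕ → ℝ) n * (x : ℕ → ℝ) n := rfl
    rw [hcx]
    have : ‖(n : ℝ) * ((c : ℕ → ℝ) n * (x : ℕ → ℝ) n)‖
        = |(c : ℕ → ℝ) n| * |(n : ℝ) * (x : ℕ → ℝ) n| := by
      rw [Real.norm_eq_abs, ← abs_mul]; ring_nf
    rw [this]
    exact mul_le_mul_of_nonneg_right (hC n) (abs_nonneg _)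

/-- Giordano's ambient ring ℝ̃ = B/o. -/
abbrev GiordanoAmbient : Type := BddSeq ⧸ littleOIdeal

/-- Little-oh polynomials. -/
def LittleOhPoly (x : ℕ → ℝ) : Prop :=
  ∃ (k : ℕ) (r : ℝ) (α a : Fin k → ℝ), (∀ i, 0 ≤ a i) ∧
    (fun n : ℕ => x n - r - ∑ i, α i * (n : ℝ) ^ (-(a i))) ∈ littleO

/-- Henle's ring: germs of real sequences at the cofinite (Fréchet) filter on ℕ. -/
abbrev HenleRing : Type := Filter.Germ (Filter.cofinite : Filter ℕ) ℝ

lemma invSqSucc_bdd : (fun n : ℕ => 1 / ((n : ℝ) + 1) ^ 2) ∈ BddSeq := by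
  refine ⟨1, fun n => ?_⟩
  have h : (0:ℝ) < ((n : ℝ) + 1) ^ 2 := by positivity
  rw [abs_of_pos (by positivity), div_le_one h]
  nlinarith [Nat.cast_nonneg (α := ℝ) n]

/-! The sequence `1 / (n + 1) ^ 2` is positive at every index, so its germ is nonzero along any
nontrivial filter: the cofinite one as well as the hyperfilter. It is bounded, hence finite in Henle's ring. Since
`n / (n + 1) ^ 2 → 0` it lies in `o` and dies in `B/o`, whereas in `ℝ*` it stays positive, and
being a null sequence it is infinitesimal. -/

theorem Filter.Germ.coe_ne_zero_of_frequently_ne {α β : Type*} [Zero β] {l : Filter α}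
    {f : α → β} (hf : ∃ᶠ x in l, f x ≠ 0) : (f : Germ l β) ≠ 0 := fun h =>
  let ⟨_, hne, heq⟩ := (hf.and_eventually (Germ.coe_eq.1 h)).exists
  hne heq

theorem Filter.Germ.neg_const_le_and_le_const_of_eventually_abs_le {α β : Type*}
    [AddCommGroup β] [LinearOrder β] [IsOrderedAddMonoid β] {l : Filter α} {f : α → β} {C : β}
    (h : ∀ᶠ x in l, |f x| ≤ C) : -(C : Germ l β) ≤ f ∧ (f : Germ l β) ≤ C := by
  have h' := h.mono fun _ => abs_le.1
  exact ⟨Germ.coe_le.2 (h'.mono fun _ hx => hx.1), Germ.coe_le.2 (h'.mono fun _ hx => hx.2)⟩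

theorem HenleRing.exists_nat_bound_of_mem_bddSeq {f : ℕ → ℝ} (hf : f ∈ BddSeq) :
    ∃ m : ℕ, -((m : ℝ) : HenleRing) ≤ f ∧ (f : HenleRing) ≤ (m : ℝ) := by
  obtain ⟨C, hC⟩ := hf
  obtain ⟨m, hm⟩ := exists_nat_ge C
  exact ⟨m, Germ.neg_const_le_and_le_const_of_eventually_abs_le
    (.of_forall fun n => (hC n).trans hm)⟩

theorem tendsto_zero_of_mem_littleO {f : ℕ → ℝ} (hf : f ∈ littleO) :
    Tendsto f atTop (nhds 0) := by
  have h := hf.mul tendsto_inv_atTop_nhds_zero_nat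
  rw [mul_zero] at h
  refine h.congr' ((eventually_ne_atTop 0).mono fun n hn => ?_)
  field_simp

theorem Hyperreal.ofSeq_pos {f : ℕ → ℝ} (hf : ∀ n, 0 < f n) : 0 < ofSeq f :=
  ofSeq_lt_ofSeq.2 (.of_forall hf)

theorem one_div_add_one_sq_mem_littleO : (fun n : ℕ => 1 / ((n : ℝ) + 1) ^ 2) ∈ littleO := by
  have h := (tendsto_natCast_div_add_atTop (1 : ℝ)).mul tendsto_one_div_add_atTop_nhds_zero_nat
  rw [mul_zero] at h
  refine h.congr fun n => ?_
  field_simp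

theorem henle_infinitesimal_vanishing_in_giordano_but_not_in_hyperreals :
    ((↑(fun n : ℕ => 1 / ((n : ℝ) + 1) ^ 2) : HenleRing) ≠ 0 ∧
      ∃ m : ℕ, -(((m : ℝ)) : HenleRing) ≤ (↑(fun n : ℕ => 1 / ((n : ℝ) + 1) ^ 2) : HenleRing) ∧
        (↑(fun n : ℕ => 1 / ((n : ℝ) + 1) ^ 2) : HenleRing) ≤ (((m : ℝ)) : HenleRing)) ∧
    ((fun n : ℕ => 1 / ((n : ℝ) + 1) ^ 2) ∈ littleO ∧
      Ideal.Quotient.mk littleOIdeal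
        (⟨fun n : ℕ => 1 / ((n : ℝ) + 1) ^ 2, invSqSucc_bdd⟩ : BddSeq) = 0) ∧
    (Hyperreal.ofSeq (fun n : ℕ => 1 / ((n : ℝ) + 1) ^ 2) ≠ 0 ∧
      0 < Hyperreal.ofSeq (fun n : ℕ => 1 / ((n : ℝ) + 1) ^ 2) ∧
      Hyperreal.Infinitesimal (Hyperreal.ofSeq (fun n : ℕ => 1 / ((n : ℝ) + 1) ^ 2))) := by
  have hpos : ∀ n : ℕ, 0 < 1 / ((n : ℝ) + 1) ^ 2 := fun n => by positivity
  have hlittleO := one_div_add_one_sq_mem_littleO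
  have hofSeq_pos := Hyperreal.ofSeq_pos hpos
  exact ⟨⟨Germ.coe_ne_zero_of_frequently_ne (.of_forall fun n => (hpos n).ne'),
      HenleRing.exists_nat_bound_of_mem_bddSeq invSqSucc_bdd⟩,
    ⟨hlittleO, Ideal.Quotient.eq_zero_iff_mem.2 hlittleO⟩,
    hofSeq_pos.ne', hofSeq_pos,
    Hyperreal.infinitesimal_of_tendsto_zero (tendsto_zero_of_mem_littleO hlittleO)⟩
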